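/- arXiv:2410.00505 — 8 statements merged into one kernel-verified Lean document; each statement's English description precedes it below -/
import Mathlib

section
/- Let A be an n×n nonnegative irreducible matrix and z a strictly positive vector in R^n. Then there exists a strictly positive vector p in R^n such that for every k, z_k / (Σ_i a_{ki} z_i) = p_k / (Σ_s a_{sk} p_s). -/
/-!
Put `c k = z k / (A z) k`, so that `z` is a fixed vector of `B = diag(c) A`. Then `1` is also an
eigenvalue of `Bᵀ`; for an eigenvector `y` we have `|y| ≤ Bᵀ |y|` entrywise, and pairing with
`z > 0` (using `B z = z`) forces equality. Irreducibility makes the nonnegative fixed vector `|y|`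
strictly positive, and `p = c |y|` satisfies `c k (Aᵀ p) k = p k`, which is the claim.
-/

/-- A nonnegative matrix is irreducible if some power connects every pair of indices. -/
def MatIrreducible {n : ℕ} (A : Matrix (Fin n) (Fin n) ℝ) : Prop :=
  ∀ i j, ∃ m : ℕ, 0 < m ∧ 0 < (A ^ m) i j

open Matrix

namespace Matrix

variable {m n K : Type*}

section LinearOrderedCommRing

variable [CommRing K] [LinearOrder K]

theorem IsIrreducible.forall_of_step {A : Matrix n n K} (hA : A.IsIrreducible) {P : n → Prop}
    (hstep : ∀ i j, 0 < A i j → P i → P j) {i : n} (hi : P i) (j : n) : P j := by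
  let := toQuiver A
  obtain ⟨p, -⟩ := hA.connected i j
  induction p with
  | nil => exact hi
  | cons _ e ih => exact hstep _ _ e.down ih

variable [IsStrictOrderedRing K] [Fintype n]

theorem IsIrreducible.mulVec_pos [DecidableEq n] {A : Matrix n n K} (hA : A.IsIrreducible)
    {z : n → K} (hz : ∀ i, 0 < z i) (i : n) : 0 < (A *ᵥ z) i := by
  obtain ⟨m, hm, hpos⟩ := (isIrreducible_iff_exists_pow_pos hA.nonneg).1 hA i i
  obtain ⟨m, rfl⟩ := Nat.exists_eq_add_one_of_ne_zero hm.ne'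
  rw [pow_succ', mul_apply] at hpos
  obtain ⟨j, -, hj⟩ := Finset.exists_ne_zero_of_sum_ne_zero hpos.ne'
  have hAij : 0 < A i j := (hA.nonneg i j).lt_of_ne' (left_ne_zero_of_mul hj)
  exact Finset.sum_pos' (fun k _ => mul_nonneg (hA.nonneg i k) (hz k).le)
    ⟨j, Finset.mem_univ j, mul_pos hAij (hz j)⟩

theorem IsIrreducible.pos_of_mul_transpose_mulVec_eq {A : Matrix n n K} (hA : A.IsIrreducible)
    {c p : n → K} (hc : ∀ i, 0 < c i) (hp : 0 ≤ p) (hcp : c * (Aᵀ *ᵥ p) = p) {i : n}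
    (hi : 0 < p i) (j : n) : 0 < p j := by
  refine hA.forall_of_step (P := fun i => 0 < p i) (fun i j hij hpi => ?_) hi j
  rw [← hcp]
  refine mul_pos (hc j) ((mul_pos hij hpi).trans_le ?_)
  exact Finset.single_le_sum (f := fun s => A s j * p s)
    (fun s _ => mul_nonneg (hA.nonneg s j) (hp s)) (Finset.mem_univ i)

theorem eq_of_le_of_dotProduct_eq {u v z : n → K} (huv : u ≤ v) (hz : ∀ i, 0 < z i)
    (h : u ⬝ᵥ z = v ⬝ᵥ z) : u = v := by
  have := (Finset.sum_eq_sum_iff_of_le fun i _ =>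
    mul_le_mul_of_nonneg_right (huv i) (hz i).le).1 h
  exact funext fun i => mul_right_cancel₀ (hz i).ne' (this i (Finset.mem_univ i))

theorem abs_mulVec_le {B : Matrix m n K} (hB : ∀ i j, 0 ≤ B i j) (y : n → K) :
    |B *ᵥ y| ≤ B *ᵥ |y| := fun i => by
  refine (Finset.abs_sum_le_sum_abs _ _).trans_eq (Finset.sum_congr rfl fun j _ => ?_)
  rw [abs_mul, abs_of_nonneg (hB i j), Pi.abs_apply]

theorem transpose_mulVec_abs_eq_abs {B : Matrix n n K} (hB : ∀ i j, 0 ≤ B i j) {y z : n → K}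
    (hz : ∀ i, 0 < z i) (hBz : B *ᵥ z = z) (hy : Bᵀ *ᵥ y = y) : Bᵀ *ᵥ |y| = |y| := by
  have hle : |y| ≤ Bᵀ *ᵥ |y| := by
    simpa only [hy] using abs_mulVec_le (B := Bᵀ) (fun i j => hB j i) y
  refine (eq_of_le_of_dotProduct_eq hle hz ?_).symm
  rw [mulVec_transpose, ← dotProduct_mulVec, hBz]

end LinearOrderedCommRing

variable [Fintype n] [DecidableEq n] [Field K]

theorem exists_ne_zero_transpose_mulVec_eq_self {B : Matrix n n K} {z : n → K} (hz : z ≠ 0)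
    (hBz : B *ᵥ z = z) : ∃ y ≠ 0, Bᵀ *ᵥ y = y := by
  have hdet : (1 - B).det = 0 :=
    exists_mulVec_eq_zero_iff.1 ⟨z, hz, by rw [sub_mulVec, one_mulVec, hBz, sub_self]⟩
  have hdetT : (1 - Bᵀ).det = 0 := by rwa [← transpose_one, ← transpose_sub, det_transpose]
  obtain ⟨y, hy, hy0⟩ := exists_mulVec_eq_zero_iff.2 hdetT
  exact ⟨y, hy, by rwa [sub_mulVec, one_mulVec, sub_eq_zero, eq_comm] at hy0⟩

variable [LinearOrder K] [IsStrictOrderedRing K]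

theorem IsIrreducible.exists_pos_mul_transpose_mulVec_eq {A : Matrix n n K}
    (hA : A.IsIrreducible) {c z : n → K} (hc : ∀ i, 0 < c i) (hz : ∀ i, 0 < z i)
    (hcz : c * (A *ᵥ z) = z) : ∃ p : n → K, (∀ i, 0 < p i) ∧ c * (Aᵀ *ᵥ p) = p := by
  cases isEmpty_or_nonempty n
  · exact ⟨0, isEmptyElim, Subsingleton.elim _ _⟩
  have hdiag (v : n → K) : diagonal c *ᵥ v = c * v := funext (mulVec_diagonal c v)
  set B := diagonal c * A
  have hB (i j : n) : 0 ≤ B i j := by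
    simpa only [B, diagonal_mul] using mul_nonneg (hc i).le (hA.nonneg i j)
  have hBz : B *ᵥ z = z := by rw [← mulVec_mulVec, hdiag, hcz]
  have hz0 : z ≠ 0 := fun h => (hz (Classical.arbitrary n)).ne' (congrFun h _)
  obtain ⟨y, hy0, hy⟩ := exists_ne_zero_transpose_mulVec_eq_self hz0 hBz
  have hw : Aᵀ *ᵥ (c * |y|) = |y| := by
    rw [← hdiag, mulVec_mulVec, ← diagonal_transpose, ← transpose_mul]
    exact transpose_mulVec_abs_eq_abs hB hz hBz hy
  have hcp : c * (Aᵀ *ᵥ (c * |y|)) = c * |y| := by rw [hw]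
  obtain ⟨i, hi⟩ := Function.ne_iff.1 hy0
  have hp : 0 ≤ c * |y| := mul_nonneg (fun i => (hc i).le) (abs_nonneg y)
  exact ⟨c * |y|, hA.pos_of_mul_transpose_mulVec_eq hc hp hcp (mul_pos (hc i) (abs_pos.2 hi)),
    hcp⟩

end Matrix

theorem stmt0 {n : ℕ} (A : Matrix (Fin n) (Fin n) ℝ)
    (hA : ∀ i j, 0 ≤ A i j) (hirr : MatIrreducible A)
    (z : Fin n → ℝ) (hz : ∀ i, 0 < z i) :
    ∃ p : Fin n → ℝ, (∀ i, 0 < p i) ∧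
      ∀ k, z k / (∑ i, A k i * z i) = p k / (∑ s, A s k * p s) := by
  have hA' : A.IsIrreducible := (isIrreducible_iff_exists_pow_pos hA).2 hirr
  have hAz := hA'.mulVec_pos hz
  obtain ⟨p, hp, hcp⟩ := hA'.exists_pos_mul_transpose_mulVec_eq
    (fun i => div_pos (hz i) (hAz i)) hz (funext fun i => div_mul_cancel₀ _ (hAz i).ne')
  refine ⟨p, hp, fun k => ?_⟩
  show z k / (A *ᵥ z) k = p k / (Aᵀ *ᵥ p) k
  have hk := congrFun hcp k
  have hAp : (Aᵀ *ᵥ p) k ≠ 0 := fun h => (hp k).ne' (by rw [← hk, Pi.mul_apply, h, mul_zero])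
  exact (eq_div_iff hAp).2 hk
end

section
/- Let C be a nonnegative n×l matrix with strictly positive row and column sums, b a strictly positive vector, d_i = min_{k: c_{ki}>0} b_k / c_{ki}, and Z₀ the set of nonnegative z with Cz ≤ b and min_k b_k/[Cz]_k = 1 (i.e., equality holds in at least one coordinate). Then every z ∈ Z₀ with z ≠ 0 can be written as z_i = c(α) α_i d_i where α_i = (z_i/d_i)/(Σ_j z_j/d_j) lies in the simplex Q and c(α) = min_k b_k/[Σ_i α_i d_i c_i]_k; conversely for every α ∈ Q the vector (c(α) α_i d_i)_i is a nonnegative solution of Cz ≤ b with equality in at least one coordinate. -/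
/-- `dmin C b i = min_{k : C k i > 0} b k / C k i`, realized as an infimum. -/
noncomputable def dmin {n l : ℕ} (C : Matrix (Fin n) (Fin l) ℝ) (b : Fin n → ℝ)
    (i : Fin l) : ℝ :=
  sInf {r : ℝ | ∃ k, 0 < C k i ∧ r = b k / C k i}

/-- `cfun C b α = min_{k : [Σ_i α_i d_i c_i]_k > 0} b k / [Σ_i α_i d_i c_i]_k`. -/
noncomputable def cfun {n l : ℕ} (C : Matrix (Fin n) (Fin l) ℝ) (b : Fin n → ℝ)
    (α : Fin l → ℝ) : ℝ :=
  sInf {r : ℝ | ∃ k, 0 < ∑ i, α i * dmin C b i * C k i ∧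
      r = b k / ∑ i, α i * dmin C b i * C k i}

/-!
Both `dmin C b i` and `cfun C b α` are the largest `t` with `t • s ≤ b` for a nonnegative
vector `s` (the column `c_i`, resp. `Σ_i α_i d_i c_i`), i.e. `min_{s k > 0} b k / s k`.
So `z = c(α) (α_i d_i)_i` is `b`-feasible and tight in some row; conversely a tight feasible
`z ≠ 0` is the multiple `S • (α_i d_i)_i` with `S = Σ_j z_j / d_j`, and tightness forces
`c(α) = S`.
-/

open Finset

/-- For `b ≥ 0`, the largest `t` with `t * s k ≤ b k` for all `k`; it is `0` (not `∞`) if `s`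
has no positive entry. -/
noncomputable def minRatio {ι : Type*} (b s : ι → ℝ) : ℝ :=
  sInf {r : ℝ | ∃ k, 0 < s k ∧ r = b k / s k}

section minRatio

variable {ι : Type*} {b s : ι → ℝ}

theorem minRatio_nonneg (hb : ∀ k, 0 ≤ b k) : 0 ≤ minRatio b s :=
  Real.sInf_nonneg fun _ ⟨k, hk, hr⟩ => hr ▸ div_nonneg (hb k) hk.le

variable [Finite ι]

theorem finite_setOf_div : {r : ℝ | ∃ k, 0 < s k ∧ r = b k / s k}.Finite :=
  (Set.finite_range fun k => b k / s k).subset (by rintro _ ⟨k, -, rfl⟩; exact ⟨k, rfl⟩)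

theorem minRatio_le_div {k : ι} (hk : 0 < s k) : minRatio b s ≤ b k / s k :=
  csInf_le finite_setOf_div.bddBelow ⟨k, hk, rfl⟩

theorem exists_minRatio_eq_div (h : ∃ k, 0 < s k) :
    ∃ k, 0 < s k ∧ minRatio b s = b k / s k := by
  obtain ⟨k₀, hk₀⟩ := h
  have hne : {r : ℝ | ∃ k, 0 < s k ∧ r = b k / s k}.Nonempty := ⟨_, k₀, hk₀, rfl⟩
  exact hne.csInf_mem finite_setOf_div

theorem minRatio_pos (hb : ∀ k, 0 < b k) (h : ∃ k, 0 < s k) : 0 < minRatio b s := by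
  obtain ⟨k, hk, heq⟩ := exists_minRatio_eq_div (b := b) h
  exact heq ▸ div_pos (hb k) hk

theorem minRatio_mul_le (hb : ∀ k, 0 ≤ b k) (k : ι) : minRatio b s * s k ≤ b k := by
  rcases lt_or_ge 0 (s k) with hk | hk
  · exact (le_div_iff₀ hk).1 (minRatio_le_div hk)
  · exact (mul_nonpos_of_nonneg_of_nonpos (minRatio_nonneg hb) hk).trans (hb k)

theorem exists_minRatio_mul_eq (h : ∃ k, 0 < s k) : ∃ k, minRatio b s * s k = b k := by
  obtain ⟨k, hk, heq⟩ := exists_minRatio_eq_div (b := b) h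
  exact ⟨k, by rw [heq, div_mul_cancel₀ _ hk.ne']⟩

theorem minRatio_eq_of_mul_le {t : ℝ} (hle : ∀ k, t * s k ≤ b k)
    (htight : ∃ k, 0 < s k ∧ t * s k = b k) : minRatio b s = t := by
  obtain ⟨k₀, hk₀, heq⟩ := htight
  refine le_antisymm ?_ (le_csInf ⟨_, k₀, hk₀, rfl⟩ ?_)
  · simpa [← heq, hk₀.ne'] using minRatio_le_div (b := b) hk₀
  · rintro _ ⟨k, hk, rfl⟩
    exact (le_div_iff₀ hk).2 (hle k)

end minRatio

theorem exists_pos_of_sum_pos {ι : Type*} {f : ι → ℝ} {s : Finset ι} (h : 0 < ∑ i ∈ s, f i) :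
    ∃ i, 0 < f i := by
  obtain ⟨i, -, hi⟩ := exists_lt_of_sum_lt (f := 0) (g := f) (s := s) (by simpa using h)
  exact ⟨i, hi⟩

section Matrix

variable {n l : ℕ} {C : Matrix (Fin n) (Fin l) ℝ} {b : Fin n → ℝ}

theorem cfun_eq_minRatio (α : Fin l → ℝ) :
    cfun C b α = minRatio b (fun k => ∑ i, α i * dmin C b i * C k i) := rfl

theorem dmin_pos (hcol : ∀ i, 0 < ∑ k, C k i) (hb : ∀ k, 0 < b k) (i : Fin l) :
    0 < dmin C b i :=
  minRatio_pos hb (exists_pos_of_sum_pos (hcol i))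

theorem cfun_mul_dmin_feasible_tight (hC : ∀ k i, 0 ≤ C k i) (hcol : ∀ i, 0 < ∑ k, C k i)
    (hb : ∀ k, 0 < b k) {α : Fin l → ℝ} (hα : ∀ i, 0 ≤ α i) (hα1 : ∑ i, α i = 1) :
    (∀ i, 0 ≤ cfun C b α * α i * dmin C b i) ∧
      (∀ k, ∑ i, C k i * (cfun C b α * α i * dmin C b i) ≤ b k) ∧
      (∃ k, ∑ i, C k i * (cfun C b α * α i * dmin C b i) = b k) := by
  have hd i := dmin_pos hcol hb i
  have hrow k : ∑ i, C k i * (cfun C b α * α i * dmin C b i) =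
      cfun C b α * ∑ i, α i * dmin C b i * C k i := by
    rw [mul_sum]; exact sum_congr rfl fun i _ => by ring
  have hs : ∃ k, 0 < ∑ i, α i * dmin C b i * C k i := by
    obtain ⟨i₀, hi₀⟩ := exists_pos_of_sum_pos (hα1 ▸ one_pos : 0 < ∑ i, α i)
    obtain ⟨k₀, hk₀⟩ := exists_pos_of_sum_pos (hcol i₀)
    exact ⟨k₀, sum_pos' (fun i _ => mul_nonneg (mul_nonneg (hα i) (hd i).le) (hC k₀ i))
      ⟨i₀, mem_univ _, mul_pos (mul_pos hi₀ (hd i₀)) hk₀⟩⟩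
  have hb' k := (hb k).le
  refine ⟨fun i => ?_, fun k => ?_, ?_⟩
  · exact mul_nonneg (mul_nonneg (minRatio_nonneg hb') (hα i)) (hd i).le
  · rw [hrow]; exact minRatio_mul_le hb' k
  · simp only [hrow]; exact exists_minRatio_mul_eq hs

theorem tight_feasible_eq_cfun_mul_dmin (hcol : ∀ i, 0 < ∑ k, C k i) (hb : ∀ k, 0 < b k)
    {z : Fin l → ℝ} (hz : ∀ i, 0 ≤ z i) (hzb : ∀ k, ∑ i, C k i * z i ≤ b k)
    (htight : ∃ k, ∑ i, C k i * z i = b k) (hz0 : z ≠ 0) :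
    (∀ i, 0 ≤ (z i / dmin C b i) / ∑ j, z j / dmin C b j) ∧
      (∑ i, (z i / dmin C b i) / ∑ j, z j / dmin C b j) = 1 ∧
      (∀ i, z i =
        cfun C b (fun i' => (z i' / dmin C b i') / ∑ j, z j / dmin C b j) *
          ((z i / dmin C b i) / ∑ j, z j / dmin C b j) * dmin C b i) := by
  have hd i := dmin_pos hcol hb i
  set S := ∑ j, z j / dmin C b j
  have hS : 0 < S := by
    obtain ⟨i₀, hi₀⟩ := Function.ne_iff.1 hz0
    exact sum_pos' (fun i _ => div_nonneg (hz i) (hd i).le)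
      ⟨i₀, mem_univ _, div_pos ((hz i₀).lt_of_ne' hi₀) (hd i₀)⟩
  have hrow k : ∑ i, (z i / dmin C b i) / S * dmin C b i * C k i =
      (∑ i, C k i * z i) / S := by
    rw [sum_div]; exact sum_congr rfl fun i _ => by field_simp [(hd i).ne']
  have hcfun : cfun C b (fun i' => (z i' / dmin C b i') / S) = S := by
    rw [cfun_eq_minRatio]
    simp only [hrow]
    refine minRatio_eq_of_mul_le (fun k => ?_) ?_
    · rw [mul_div_cancel₀ _ hS.ne']; exact hzb k
    · obtain ⟨k, hk⟩ := htight
      exact ⟨k, hk ▸ div_pos (hb k) hS, by rw [mul_div_cancel₀ _ hS.ne', hk]⟩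
  refine ⟨fun i => div_nonneg (div_nonneg (hz i) (hd i).le) hS.le, ?_, fun i => ?_⟩
  · rw [← sum_div, div_self hS.ne']
  · rw [hcfun]; field_simp [(hd i).ne']

end Matrix

theorem stmt7_general {n l : ℕ} (C : Matrix (Fin n) (Fin l) ℝ)
    (hC : ∀ k i, 0 ≤ C k i)
    (hcol : ∀ i, 0 < ∑ k, C k i)
    (b : Fin n → ℝ) (hb : ∀ k, 0 < b k) :
    (∀ z : Fin l → ℝ, (∀ i, 0 ≤ z i) → (∀ k, ∑ i, C k i * z i ≤ b k) →
      (∃ k, ∑ i, C k i * z i = b k) → z ≠ 0 →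
      (∀ i, 0 ≤ (z i / dmin C b i) / ∑ j, z j / dmin C b j) ∧
      (∑ i, (z i / dmin C b i) / ∑ j, z j / dmin C b j) = 1 ∧
      (∀ i, z i =
        cfun C b (fun i' => (z i' / dmin C b i') / ∑ j, z j / dmin C b j) *
          ((z i / dmin C b i) / ∑ j, z j / dmin C b j) * dmin C b i)) ∧
    (∀ α : Fin l → ℝ, (∀ i, 0 ≤ α i) → (∑ i, α i = 1) →
      (∀ i, 0 ≤ cfun C b α * α i * dmin C b i) ∧
      (∀ k, ∑ i, C k i * (cfun C b α * α i * dmin C b i) ≤ b k) ∧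
      (∃ k, ∑ i, C k i * (cfun C b α * α i * dmin C b i) = b k)) :=
  ⟨fun _ hz hzb htight hz0 => tight_feasible_eq_cfun_mul_dmin hcol hb hz hzb htight hz0,
    fun _ hα hα1 => cfun_mul_dmin_feasible_tight hC hcol hb hα hα1⟩

theorem stmt7 {n l : ℕ} (C : Matrix (Fin n) (Fin l) ℝ)
    (hC : ∀ k i, 0 ≤ C k i)
    (hrow : ∀ k, 0 < ∑ i, C k i) (hcol : ∀ i, 0 < ∑ k, C k i)
    (b : Fin n → ℝ) (hb : ∀ k, 0 < b k) :
    (∀ z : Fin l → ℝ, (∀ i, 0 ≤ z i) → (∀ k, ∑ i, C k i * z i ≤ b k) →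
      (∃ k, ∑ i, C k i * z i = b k) → z ≠ 0 →
      (∀ i, 0 ≤ (z i / dmin C b i) / ∑ j, z j / dmin C b j) ∧
      (∑ i, (z i / dmin C b i) / ∑ j, z j / dmin C b j) = 1 ∧
      (∀ i, z i =
        cfun C b (fun i' => (z i' / dmin C b i') / ∑ j, z j / dmin C b j) *
          ((z i / dmin C b i) / ∑ j, z j / dmin C b j) * dmin C b i)) ∧
    (∀ α : Fin l → ℝ, (∀ i, 0 ≤ α i) → (∑ i, α i = 1) →
      (∀ i, 0 ≤ cfun C b α * α i * dmin C b i) ∧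
      (∀ k, ∑ i, C k i * (cfun C b α * α i * dmin C b i) ≤ b k) ∧
      (∃ k, ∑ i, C k i * (cfun C b α * α i * dmin C b i) = b k)) :=
  stmt7_general C hC hcol b hb
end

section
/- Let A be an n×n nonnegative nonzero matrix and z a nonnegative vector such that b̄ = Az is strictly positive. Then there exists p in the simplex P = {p ≥ 0, Σ p_i = 1} such that z_i Σ_s a_{si} p_s = b̄_i p_i for all i = 1,…,n. -/
/-! `N = diag(Az)⁻¹ A diag(z)` is row-stochastic, so the linear map `q ↦ qN` sends the simplex
into itself. The Cesàro means of any orbit are almost invariant, so a limit point of them is a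
fixed point `q` (Markov–Kakutani). Since `qN = z ⊙ ((q / Az) A)`, the normalisation of `q / Az`
is the required `p`. -/

open Filter Finset Matrix Set Topology

theorem Convex.birkhoffAverage_mem {𝕜 E α : Type*} [Field 𝕜] [LinearOrder 𝕜]
    [IsStrictOrderedRing 𝕜] [AddCommGroup E] [Module 𝕜 E] {K : Set E} (hK : Convex 𝕜 K)
    {f : α → α} {g : α → E} {x : α} (hg : ∀ k, g (f^[k] x) ∈ K) {n : ℕ} (hn : n ≠ 0) :
    birkhoffAverage 𝕜 f g n x ∈ K := by
  rw [birkhoffAverage, birkhoffSum, smul_sum]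
  refine hK.sum_mem (fun _ _ => by positivity) ?_ fun k _ => hg k
  rw [sum_const, card_range, nsmul_eq_mul, mul_inv_cancel₀ (Nat.cast_ne_zero.2 hn)]

section NormedSpace

variable {E : Type*} [NormedAddCommGroup E] [NormedSpace ℝ E]

theorem ContinuousLinearMap.map_birkhoffAverage_id (T : E →L[ℝ] E) (n : ℕ) (x : E) :
    T (birkhoffAverage ℝ T id n x) = birkhoffAverage ℝ T id n (T x) := by
  rw [map_birkhoffAverage ℝ ℝ T]
  simp only [birkhoffAverage, birkhoffSum, Function.comp_apply, id_eq,
    ← Function.iterate_succ_apply' T, Function.iterate_succ_apply]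

theorem ContinuousLinearMap.exists_mem_isFixedPt_of_mapsTo {K : Set E} (hKc : IsCompact K)
    (hKconv : Convex ℝ K) (hKne : K.Nonempty) (T : E →L[ℝ] E) (hT : MapsTo T K K) :
    ∃ x ∈ K, Function.IsFixedPt T x := by
  obtain ⟨x₀, hx₀⟩ := hKne
  set u : ℕ → E := fun n => birkhoffAverage ℝ T id (n + 1) x₀
  have hu : ∀ n, u n ∈ K := fun n =>
    hKconv.birkhoffAverage_mem (fun k => hT.iterate k hx₀) n.succ_ne_zero
  have hdrift : Tendsto (fun n => T (u n) - u n) atTop (𝓝 0) := by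
    simp only [u, T.map_birkhoffAverage_id]
    refine (tendsto_add_atTop_iff_nat 1).2 (tendsto_birkhoffAverage_apply_sub_birkhoffAverage ℝ ?_)
    exact hKc.isBounded.subset (range_subset_iff.2 fun k => hT.iterate k hx₀)
  obtain ⟨q, hq, φ, hφ, hlim⟩ := hKc.tendsto_subseq hu
  have hdrift' : Tendsto (fun n => T (u (φ n)) - u (φ n)) atTop (𝓝 (T q - q)) :=
    ((T.continuous.tendsto q).comp hlim).sub hlim
  exact ⟨q, hq, sub_eq_zero.1 (tendsto_nhds_unique hdrift' (hdrift.comp hφ.tendsto_atTop))⟩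

end NormedSpace

theorem Matrix.exists_mem_stdSimplex_vecMul_eq_self {ι : Type*} [Fintype ι] [DecidableEq ι]
    [Nonempty ι] {M : Matrix ι ι ℝ} (hM : M ∈ rowStochastic ℝ ι) :
    ∃ q ∈ stdSimplex ℝ ι, q ᵥ* M = q := by
  have hmaps : MapsTo (· ᵥ* M) (stdSimplex ℝ ι) (stdSimplex ℝ ι) := fun q hq => by
    refine ⟨nonneg_vecMul_of_mem_rowStochastic hM hq.1, ?_⟩
    have := vecMul_dotProduct_one_eq_one_rowStochastic hM ((dotProduct_one q).trans hq.2)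
    rwa [dotProduct_one] at this
  obtain ⟨i⟩ := ‹Nonempty ι›
  exact (LinearMap.toContinuousLinearMap (vecMulLinear M)).exists_mem_isFixedPt_of_mapsTo
    (isCompact_stdSimplex ℝ ι) (convex_stdSimplex ℝ ι) ⟨_, single_mem_stdSimplex ℝ i⟩ hmaps

namespace Matrix

variable {ι : Type*} [Fintype ι]

noncomputable def stochasticScaling (A : Matrix ι ι ℝ) (z : ι → ℝ) : Matrix ι ι ℝ :=
  of fun i k => A i k * z k / (A *ᵥ z) i

theorem stochasticScaling_mem_rowStochastic [DecidableEq ι] {A : Matrix ι ι ℝ} {z : ι → ℝ}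
    (hA : ∀ i j, 0 ≤ A i j) (hz : ∀ i, 0 ≤ z i) (hAz : ∀ i, 0 < (A *ᵥ z) i) :
    stochasticScaling A z ∈ rowStochastic ℝ ι := by
  refine mem_rowStochastic_iff_sum.2 ⟨fun i k => ?_, fun i => ?_⟩
  · exact div_nonneg (mul_nonneg (hA i k) (hz k)) (hAz i).le
  · simp only [stochasticScaling, of_apply, ← sum_div]
    exact div_self (hAz i).ne'

theorem vecMul_stochasticScaling (A : Matrix ι ι ℝ) (z q : ι → ℝ) :
    q ᵥ* stochasticScaling A z = z * ((q / (A *ᵥ z)) ᵥ* A) := by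
  ext k
  simp only [vecMul, dotProduct, stochasticScaling, of_apply, Pi.mul_apply, Pi.div_apply, mul_sum]
  exact sum_congr rfl fun s _ => by ring

end Matrix

theorem inv_sum_smul_mem_stdSimplex {𝕜 ι : Type*} [Field 𝕜] [LinearOrder 𝕜]
    [IsStrictOrderedRing 𝕜] [Fintype ι] {r : ι → 𝕜} (hr : ∀ i, 0 ≤ r i) (hr0 : ∑ i, r i ≠ 0) :
    (∑ i, r i)⁻¹ • r ∈ stdSimplex 𝕜 ι :=
  ⟨fun i => smul_nonneg (inv_nonneg.2 (sum_nonneg fun j _ => hr j)) (hr i), by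
    simp only [Pi.smul_apply, smul_eq_mul, ← mul_sum, inv_mul_cancel₀ hr0]⟩

theorem stmt8 {n : ℕ} (A : Matrix (Fin n) (Fin n) ℝ)
    (hA : ∀ i j, 0 ≤ A i j) (hA0 : A ≠ 0)
    (z : Fin n → ℝ) (hz : ∀ i, 0 ≤ z i)
    (hbar : ∀ i, 0 < ∑ j, A i j * z j) :
    ∃ p : Fin n → ℝ, (∀ i, 0 ≤ p i) ∧ (∑ i, p i = 1) ∧
      ∀ i, z i * (∑ s, A s i * p s) = (∑ j, A i j * z j) * p i := by
  have : Nonempty (Fin n) := by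
    by_contra h
    exact hA0 (ext fun i => (h ⟨i⟩).elim)
  have hb : ∀ i, 0 < (A *ᵥ z) i := hbar
  obtain ⟨q, hq, hfix⟩ :=
    exists_mem_stdSimplex_vecMul_eq_self (stochasticScaling_mem_rowStochastic hA hz hb)
  set r := q / (A *ᵥ z)
  have hr : ∀ i, 0 ≤ r i := fun i => div_nonneg (hq.1 i) (hb i).le
  have hr_sum : ∑ i, r i ≠ 0 := by
    obtain ⟨i, hi⟩ : ∃ i, q i ≠ 0 := by
      by_contra! h
      simpa [h] using hq.2
    exact (sum_pos' (fun j _ => hr j) ⟨i, mem_univ i, div_pos ((hq.1 i).lt_of_ne' hi) (hb i)⟩).ne'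
  have hr_eq : z * (r ᵥ* A) = (A *ᵥ z) * r := by
    rw [← vecMul_stochasticScaling, hfix]
    ext i
    exact (mul_div_cancel₀ (q i) (hb i).ne').symm
  set p := (∑ i, r i)⁻¹ • r
  have hp_eq : z * (p ᵥ* A) = (A *ᵥ z) * p := by
    rw [smul_vecMul, mul_smul_comm, hr_eq, mul_smul_comm]
  obtain ⟨hp, hp_sum⟩ := inv_sum_smul_mem_stdSimplex hr hr_sum
  refine ⟨p, hp, hp_sum, fun k => ?_⟩
  simpa only [Pi.mul_apply, vecMul, dotProduct, mulVec, mul_comm (p _)] using congrFun hp_eq k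
end

section
/- Let A be an n×n nonnegative irreducible productive matrix and x a strictly positive solution of x = Ax + c with c strictly positive (x_k = Σ_i a_{ki} x_i + c_k, c_k > 0). Let p⁰ > 0 satisfy p⁰_k / (Σ_s a_{sk} p⁰_s) = x_k / (Σ_i a_{ki} x_i) for all k (such p⁰ exists). Then for every i, p⁰_i − Σ_s a_{si} p⁰_s = p⁰_i (1 − Σ_j a_{ij} x_j / x_i) > 0, i.e., the added value in every industry is strictly positive. -/
def Productive {n : ℕ} (A : Matrix (Fin n) (Fin n) ℝ) : Prop :=
  ∃ B : Matrix (Fin n) (Fin n) ℝ, (∀ i j, 0 ≤ B i j) ∧ (1 - A) * B = 1 ∧ B * (1 - A) = 1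

/-- Inverting both sides of `a / b = c / d` gives `b / a = d / c`; since `0⁻¹ = 0` in Lean this
needs no hypothesis on `b` or `d`. -/
lemma sub_eq_mul_one_sub_div_of_div_eq_div {K : Type*} [Field K] {a b c d : K} (ha : a ≠ 0)
    (h : a / b = c / d) : a - b = a * (1 - d / c) := by
  have hinv : b / a = d / c := by simpa only [inv_div] using congrArg Inv.inv h
  rw [← hinv]
  field_simp

theorem stmt11_general {n : ℕ} (A : Matrix (Fin n) (Fin n) ℝ)
    (c : Fin n → ℝ) (hc : ∀ k, 0 < c k)
    (x : Fin n → ℝ) (hx : ∀ k, 0 < x k)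
    (hbal : ∀ k, x k = (∑ i, A k i * x i) + c k)
    (p : Fin n → ℝ) (hp : ∀ k, 0 < p k)
    (hprop : ∀ k, p k / (∑ s, A s k * p s) = x k / (∑ i, A k i * x i)) :
    ∀ i, p i - (∑ s, A s i * p s) = p i * (1 - (∑ j, A i j * x j) / x i) ∧
      0 < p i - (∑ s, A s i * p s) := by
  intro i
  have hvalue := sub_eq_mul_one_sub_div_of_div_eq_div (hp i).ne' (hprop i)
  have hinput : (∑ j, A i j * x j) < x i := by linarith [hbal i, hc i]
  refine ⟨hvalue, hvalue ▸ mul_pos (hp i) (sub_pos.2 ((div_lt_one (hx i)).2 hinput))⟩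

theorem stmt11 {n : ℕ} (A : Matrix (Fin n) (Fin n) ℝ)
    (hA : ∀ i j, 0 ≤ A i j) (hirr : MatIrreducible A) (hprod : Productive A)
    (c : Fin n → ℝ) (hc : ∀ k, 0 < c k)
    (x : Fin n → ℝ) (hx : ∀ k, 0 < x k)
    (hbal : ∀ k, x k = (∑ i, A k i * x i) + c k)
    (p : Fin n → ℝ) (hp : ∀ k, 0 < p k)
    (hprop : ∀ k, p k / (∑ s, A s k * p s) = x k / (∑ i, A k i * x i)) :
    ∀ i, p i - (∑ s, A s i * p s) = p i * (1 - (∑ j, A i j * x j) / x i) ∧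
      0 < p i - (∑ s, A s i * p s) :=
  stmt11_general A c hc x hx hbal p hp hprop
end

section
/- Let A be an n×n nonnegative irreducible matrix and x a strictly positive solution of x = Ax + c where c_k ≥ 0 for k ∈ I and c_k < 0 for k ∈ J, with J nonempty. Let p⁰ > 0 satisfy p⁰_k/(Σ_s a_{sk} p⁰_s) = x_k/(Σ_i a_{ki} x_i) for all k. Then p⁰_i − Σ_s a_{si} p⁰_s = p⁰_i (1 − Σ_j a_{ij} x_j / x_i) < 0 for every i ∈ J, i.e., industries in J produce negative added value. -/
lemma sub_eq_mul_one_sub_div_of_div_eq_div_s12 {p S x T : ℝ} (hx : 0 < x) (hT : 0 < T)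
    (h : p / S = x / T) : p - S = p * (1 - T / x) := by
  have hS : S ≠ 0 := by
    rintro rfl
    rw [div_zero] at h
    exact (div_pos hx hT).ne h
  have hcross : p * T = x * S := (div_eq_div_iff hS hT.ne').mp h
  field_simp
  linarith

lemma mul_one_sub_div_neg {p x T : ℝ} (hp : 0 < p) (hx : 0 < x) (hxT : x < T) :
    p * (1 - T / x) < 0 :=
  mul_neg_of_pos_of_neg hp (sub_neg.mpr ((one_lt_div hx).mpr hxT))

theorem stmt12_general {n : ℕ} (A : Matrix (Fin n) (Fin n) ℝ)
    (J : Finset (Fin n))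
    (c : Fin n → ℝ) (hcJ : ∀ k ∈ J, c k < 0)
    (x : Fin n → ℝ) (hx : ∀ k, 0 < x k)
    (hbal : ∀ k, x k = (∑ i, A k i * x i) + c k)
    (p : Fin n → ℝ) (hp : ∀ k, 0 < p k)
    (hprop : ∀ k, p k / (∑ s, A s k * p s) = x k / (∑ i, A k i * x i)) :
    ∀ i ∈ J, p i - (∑ s, A s i * p s) = p i * (1 - (∑ j, A i j * x j) / x i) ∧
      p i - (∑ s, A s i * p s) < 0 := by
  intro i hi
  have hxT : x i < ∑ j, A i j * x j := by linarith [hbal i, hcJ i hi]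
  have hvalue := sub_eq_mul_one_sub_div_of_div_eq_div_s12 (hx i) ((hx i).trans hxT) (hprop i)
  exact ⟨hvalue, hvalue ▸ mul_one_sub_div_neg (hp i) (hx i) hxT⟩

theorem stmt12 {n : ℕ} (A : Matrix (Fin n) (Fin n) ℝ)
    (hA : ∀ i j, 0 ≤ A i j) (hirr : MatIrreducible A)
    (I J : Finset (Fin n)) (hIJ : I ∪ J = Finset.univ) (hdisj : Disjoint I J)
    (hJne : J.Nonempty)
    (c : Fin n → ℝ) (hcI : ∀ k ∈ I, 0 ≤ c k) (hcJ : ∀ k ∈ J, c k < 0)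
    (x : Fin n → ℝ) (hx : ∀ k, 0 < x k)
    (hbal : ∀ k, x k = (∑ i, A k i * x i) + c k)
    (p : Fin n → ℝ) (hp : ∀ k, 0 < p k)
    (hprop : ∀ k, p k / (∑ s, A s k * p s) = x k / (∑ i, A k i * x i)) :
    ∀ i ∈ J, p i - (∑ s, A s i * p s) = p i * (1 - (∑ j, A i j * x j) / x i) ∧
      p i - (∑ s, A s i * p s) < 0 :=
  stmt12_general A J c hcJ x hx hbal p hp hprop
end

section
/- Let A be an n×n nonnegative irreducible matrix, x > 0 satisfying x = Ax + c, and p⁰ > 0 satisfying p⁰_i/(Σ_s a_{si} p⁰_s) = x_i/(Σ_j a_{ij} x_j) for all i. Then for every industry i, the added value Δ_i = x_i(p⁰_i − Σ_s a_{si} p⁰_s) equals the value of the final product C_i = p⁰_i c_i. -/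
open Finset

namespace Matrix

variable {ι R : Type*} [Fintype ι] [DecidableEq ι] [Semiring R]

theorem pow_succ_apply_eq_zero_of_col_eq_zero {A : Matrix ι ι R} {i : ι}
    (h : ∀ s, A s i = 0) (m : ℕ) (j : ι) : (A ^ (m + 1)) j i = 0 := by
  simp [pow_succ, mul_apply, h]

theorem pow_succ_apply_eq_zero_of_row_eq_zero {A : Matrix ι ι R} {i : ι}
    (h : ∀ s, A i s = 0) (m : ℕ) (j : ι) : (A ^ (m + 1)) i j = 0 := by
  simp [pow_succ', mul_apply, h]

end Matrix

namespace MatIrreducible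

variable {n : ℕ} {A : Matrix (Fin n) (Fin n) ℝ}

theorem exists_col_ne_zero (hirr : MatIrreducible A) (i : Fin n) : ∃ s, A s i ≠ 0 := by
  obtain ⟨m, hm, hpos⟩ := hirr i i
  by_contra! h
  obtain ⟨k, rfl⟩ := Nat.exists_eq_succ_of_ne_zero hm.ne'
  simp [Matrix.pow_succ_apply_eq_zero_of_col_eq_zero h] at hpos

theorem exists_row_ne_zero (hirr : MatIrreducible A) (i : Fin n) : ∃ s, A i s ≠ 0 := by
  obtain ⟨m, hm, hpos⟩ := hirr i i
  by_contra! h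
  obtain ⟨k, rfl⟩ := Nat.exists_eq_succ_of_ne_zero hm.ne'
  simp [Matrix.pow_succ_apply_eq_zero_of_row_eq_zero h] at hpos

end MatIrreducible

theorem sum_mul_pos_of_exists_ne_zero {ι R : Type*} [Fintype ι] [Semiring R] [PartialOrder R]
    [IsStrictOrderedRing R] {w v : ι → R} (hw : ∀ s, 0 ≤ w s) (hv : ∀ s, 0 < v s)
    (h : ∃ s, w s ≠ 0) : 0 < ∑ s, w s * v s := by
  obtain ⟨s, hs⟩ := h
  exact sum_pos' (fun t _ => mul_nonneg (hw t) (hv t).le)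
    ⟨s, mem_univ s, mul_pos ((hw s).lt_of_ne' hs) (hv s)⟩

theorem stmt14 {n : ℕ} (A : Matrix (Fin n) (Fin n) ℝ)
    (hA : ∀ i j, 0 ≤ A i j) (hirr : MatIrreducible A)
    (c : Fin n → ℝ)
    (x : Fin n → ℝ) (hx : ∀ k, 0 < x k)
    (hbal : ∀ k, x k = (∑ i, A k i * x i) + c k)
    (p : Fin n → ℝ) (hp : ∀ k, 0 < p k)
    (hprop : ∀ i, p i / (∑ s, A s i * p s) = x i / (∑ j, A i j * x j)) :
    ∀ i, x i * (p i - ∑ s, A s i * p s) = p i * c i := by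
  intro i
  have hcol : 0 < ∑ s, A s i * p s :=
    sum_mul_pos_of_exists_ne_zero (hA · i) hp (hirr.exists_col_ne_zero i)
  have hrow : 0 < ∑ j, A i j * x j :=
    sum_mul_pos_of_exists_ne_zero (hA i) hx (hirr.exists_row_ne_zero i)
  have hcross := (div_eq_div_iff hcol.ne' hrow.ne').mp (hprop i)
  linear_combination p i * hbal i + hcross
end

section
/- Let A be a nonnegative n×n matrix with strictly positive row and column sums, and b a strictly positive vector not in the cone generated by the columns of A. Let Z = {z ≥ 0 : Az ≤ b} and Z₀ = {z ∈ Z : min_k b_k/[Az]_k = 1} (solutions achieving equality in some coordinate). Then the infimum of Σ_k (b_k − [Az]_k)² over Z equals its infimum over Z₀, and this infimum is attained. -/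
/-!
The feasible set `{z ≥ 0 : A z ≤ b}` is compact, because a positive column sum bounds each
coordinate, so the squared residual attains its minimum on it. At a minimiser `z` no constraint
can be slack everywhere: otherwise `b - A z > 0` has positive inner product with every column
of `A`, and a small step along that coordinate stays feasible and lowers the residual.
-/

open Filter Finset Matrix Set Topology

section Descent

variable {ι : Type*} [Fintype ι]

lemma eventually_sum_sq_sub_mul_lt {d a : ι → ℝ} (h : 0 < ∑ k, d k * a k) :
    ∀ᶠ t in 𝓝[>] 0, ∑ k, (d k - t * a k) ^ 2 < ∑ k, d k ^ 2 := by
  have hsmall : ∀ᶠ t in 𝓝 (0 : ℝ), t * ∑ k, a k ^ 2 < 2 * ∑ k, d k * a k :=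
    (continuous_id.mul continuous_const).continuousAt.eventually_lt continuousAt_const
      (by simpa using h)
  filter_upwards [hsmall.filter_mono nhdsWithin_le_nhds, self_mem_nhdsWithin]
    with t ht (htpos : 0 < t)
  have hexpand : ∑ k, (d k - t * a k) ^ 2
      = ∑ k, d k ^ 2 - t * (2 * ∑ k, d k * a k - t * ∑ k, a k ^ 2) := by
    simp only [mul_sub, mul_sum, ← sum_sub_distrib]
    exact sum_congr rfl fun k _ => by ring
  rw [hexpand]
  exact sub_lt_self _ (mul_pos htpos (sub_pos.2 ht))

lemma eventually_forall_mul_lt {d : ι → ℝ} (hd : ∀ k, 0 < d k) (a : ι → ℝ) :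
    ∀ᶠ t in 𝓝 0, ∀ k, t * a k < d k :=
  eventually_all.2 fun k =>
    (continuous_id.mul continuous_const).continuousAt.eventually_lt continuousAt_const
      (by simpa using hd k)

end Descent

section Residual

variable {m n : Type*} [Fintype n]

def feasibleSet (A : Matrix m n ℝ) (b : m → ℝ) : Set (n → ℝ) := {z | 0 ≤ z ∧ A *ᵥ z ≤ b}

lemma isClosed_feasibleSet {A : Matrix m n ℝ} {b : m → ℝ} : IsClosed (feasibleSet A b) :=
  (isClosed_le continuous_const continuous_id).inter
    (isClosed_le (continuous_const.matrix_mulVec continuous_id) continuous_const)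

variable [Fintype m]

def residualSq (A : Matrix m n ℝ) (b : m → ℝ) (z : n → ℝ) : ℝ := ∑ k, (b k - (A *ᵥ z) k) ^ 2

variable {A : Matrix m n ℝ} {b : m → ℝ}

lemma feasibleSet_subset_Icc (hA : ∀ k i, 0 ≤ A k i) (hcol : ∀ i, 0 < ∑ k, A k i) :
    feasibleSet A b ⊆ Icc 0 fun i => (∑ k, b k) / ∑ k, A k i := by
  rintro z ⟨hz, hAz⟩
  refine ⟨hz, fun i => (le_div_iff₀ (hcol i)).2 ?_⟩
  calc z i * ∑ k, A k i = ∑ k, A k i * z i := by rw [mul_sum]; simp only [mul_comm]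
    _ ≤ ∑ k, (A *ᵥ z) k :=
      sum_le_sum fun k _ => single_le_sum (f := fun j => A k j * z j)
        (fun j _ => mul_nonneg (hA k j) (hz j)) (mem_univ i)
    _ ≤ ∑ k, b k := sum_le_sum fun k _ => hAz k

lemma isCompact_feasibleSet (hA : ∀ k i, 0 ≤ A k i) (hcol : ∀ i, 0 < ∑ k, A k i) :
    IsCompact (feasibleSet A b) :=
  isCompact_Icc.of_isClosed_subset isClosed_feasibleSet (feasibleSet_subset_Icc hA hcol)

lemma continuous_residualSq : Continuous (residualSq A b) := by
  unfold residualSq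
  fun_prop

lemma exists_isMinOn_residualSq (hA : ∀ k i, 0 ≤ A k i) (hcol : ∀ i, 0 < ∑ k, A k i)
    (hb : 0 ≤ b) : ∃ z ∈ feasibleSet A b, IsMinOn (residualSq A b) (feasibleSet A b) z :=
  (isCompact_feasibleSet hA hcol).exists_isMinOn ⟨0, le_rfl, by simpa using hb⟩
    continuous_residualSq.continuousOn

lemma not_isMinOn_residualSq_of_mulVec_lt [DecidableEq n] {z : n → ℝ} (i : n)
    (hA : ∀ k, 0 ≤ A k i) (hcol : 0 < ∑ k, A k i) (hz : 0 ≤ z) (hlt : ∀ k, (A *ᵥ z) k < b k) :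
    ¬ IsMinOn (residualSq A b) (feasibleSet A b) z := by
  intro hmin
  set d := b - A *ᵥ z
  have hd : ∀ k, 0 < d k := fun k => sub_pos.2 (hlt k)
  have hda : 0 < ∑ k, d k * A k i := by
    obtain ⟨k, -, hk⟩ := exists_lt_of_sum_lt (by simpa using hcol : ∑ _k : m, (0 : ℝ) < ∑ k, A k i)
    exact sum_pos' (fun k _ => mul_nonneg (hd k).le (hA k)) ⟨k, mem_univ k, mul_pos (hd k) hk⟩
  obtain ⟨t, (hdesc : _ < _), hfeas, (ht : 0 < t)⟩ :=
    ((eventually_sum_sq_sub_mul_lt hda).and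
      (((eventually_forall_mul_lt hd fun k => A k i).filter_mono nhdsWithin_le_nhds).and
        self_mem_nhdsWithin)).exists
  have hstep : ∀ k, (A *ᵥ (z + t • Pi.single i 1)) k = (A *ᵥ z) k + t * A k i := by
    simp [mulVec_add, mulVec_smul]
  have hmem : z + t • Pi.single i 1 ∈ feasibleSet A b := by
    refine ⟨add_nonneg hz (smul_nonneg ht.le (Pi.single_nonneg.2 zero_le_one)), fun k => ?_⟩
    have := hfeas k
    rw [hstep k]
    simp only [d, Pi.sub_apply] at this
    linarith
  have hres : residualSq A b (z + t • Pi.single i 1) = ∑ k, (d k - t * A k i) ^ 2 :=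
    sum_congr rfl fun k _ => by rw [hstep k]; simp only [d, Pi.sub_apply]; ring
  exact (hmin hmem).not_gt (hres ▸ hdesc)

end Residual

theorem stmt17_general {n : ℕ} (A : Matrix (Fin n) (Fin n) ℝ)
    (hA : ∀ i j, 0 ≤ A i j)
    (hcol : ∀ i, 0 < ∑ k, A k i)
    (b : Fin n → ℝ) (hb : ∀ k, 0 < b k)
    (hcone : ¬ ∃ z : Fin n → ℝ, (∀ i, 0 ≤ z i) ∧ ∀ k, ∑ i, A k i * z i = b k) :
    ∃ z0 : Fin n → ℝ, (∀ i, 0 ≤ z0 i) ∧ (∀ k, ∑ i, A k i * z0 i ≤ b k) ∧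
      (∃ k, ∑ i, A k i * z0 i = b k) ∧
      ∀ z : Fin n → ℝ, (∀ i, 0 ≤ z i) → (∀ k, ∑ i, A k i * z i ≤ b k) →
        ∑ k, (b k - ∑ i, A k i * z0 i) ^ 2 ≤ ∑ k, (b k - ∑ i, A k i * z i) ^ 2 := by
  obtain ⟨i⟩ : Nonempty (Fin n) := by
    rcases isEmpty_or_nonempty (Fin n) with h | h
    · exact (hcone ⟨0, fun _ => le_rfl, fun k => isEmptyElim k⟩).elim
    · exact h
  obtain ⟨z0, ⟨hz0, hAz0⟩, hmin⟩ := exists_isMinOn_residualSq hA hcol fun k => (hb k).le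
  refine ⟨z0, hz0, hAz0, ?_, fun z hz hAz => hmin ⟨hz, hAz⟩⟩
  by_contra! hslack
  exact not_isMinOn_residualSq_of_mulVec_lt i (hA · i) (hcol i) hz0
    (fun k => (hAz0 k).lt_of_ne (hslack k)) hmin

theorem stmt17 {n : ℕ} (A : Matrix (Fin n) (Fin n) ℝ)
    (hA : ∀ i j, 0 ≤ A i j)
    (hrow : ∀ k, 0 < ∑ i, A k i) (hcol : ∀ i, 0 < ∑ k, A k i)
    (b : Fin n → ℝ) (hb : ∀ k, 0 < b k)
    (hcone : ¬ ∃ z : Fin n → ℝ, (∀ i, 0 ≤ z i) ∧ ∀ k, ∑ i, A k i * z i = b k) :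
    ∃ z0 : Fin n → ℝ, (∀ i, 0 ≤ z0 i) ∧ (∀ k, ∑ i, A k i * z0 i ≤ b k) ∧
      (∃ k, ∑ i, A k i * z0 i = b k) ∧
      ∀ z : Fin n → ℝ, (∀ i, 0 ≤ z i) → (∀ k, ∑ i, A k i * z i ≤ b k) →
        ∑ k, (b k - ∑ i, A k i * z0 i) ^ 2 ≤ ∑ k, (b k - ∑ i, A k i * z i) ^ 2 :=
  stmt17_general A hA hcol b hb hcone
end

section
/- Let A be an n×n nonnegative irreducible productive matrix and x > 0 with (I−A)x > 0 componentwise. Define the taxation vector π by 1 − π_i = b·(Σ_j a_{ij} x_j)/x_i for a fixed b with 0 < b < min_i x_i/(Σ_j a_{ij} x_j). Then 0 < π_i < 1 for all i, and for any strictly positive p⁰ satisfying p⁰_i/(Σ_s a_{si} p⁰_s) = x_i/(Σ_j a_{ij} x_j), the equation Σ_i a_{ki} (1−π_i) x_i p⁰_i / (Σ_s a_{si} p⁰_s) = (1−π_k) x_k holds for all k. -/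
/-!
The tax is chosen so that after-tax output is proportional to intermediate demand:
`(1 - π i) * x i = b * (A x)_i`. The price condition `p i / (pᵀ A)_i = x i / (A x)_i` then turns
the deflated after-tax revenue of sector `i` into `b * x i`, and summing it against row `k` of `A`
gives back `b * (A x)_k = (1 - π k) * x k`. The bounds `0 < π i < 1` are the bounds
`0 < b < x i / (A x)_i` in disguise.
-/

namespace PerfectTaxation

variable {t b s x : ℝ}

theorem pos_of_lt_div (hb : 0 < b) (hx : 0 < x) (h : b < x / s) : 0 < s :=
  (div_pos_iff_of_pos_left hx).mp (hb.trans h)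

theorem one_sub_mul_eq (hx : x ≠ 0) (ht : 1 - t = b * s / x) : (1 - t) * x = b * s := by
  rw [ht, div_mul_cancel₀ _ hx]

theorem pos_and_lt_one (hb : 0 < b) (hx : 0 < x) (hbs : b < x / s) (ht : 1 - t = b * s / x) :
    0 < t ∧ t < 1 := by
  have hs : 0 < s := pos_of_lt_div hb hx hbs
  have hlt : b * s < x := (lt_div_iff₀ hs).mp hbs
  have hpos : 0 < 1 - t := ht ▸ div_pos (mul_pos hb hs) hx
  have hlt_one : 1 - t < 1 := ht ▸ (div_lt_one hx).mpr hlt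
  constructor <;> linarith

theorem one_sub_mul_mul_div_eq {p c : ℝ} (hx : x ≠ 0) (hs : s ≠ 0) (ht : 1 - t = b * s / x)
    (hp : p / c = x / s) : (1 - t) * x * p / c = b * x := by
  rw [one_sub_mul_eq hx ht, mul_div_assoc, hp]
  field_simp

end PerfectTaxation

open PerfectTaxation in
theorem stmt19_general {n : ℕ} (A : Matrix (Fin n) (Fin n) ℝ)
    (x : Fin n → ℝ) (hx : ∀ i, 0 < x i)
    (b : ℝ) (hb : 0 < b) (hbmin : ∀ i, b < x i / ∑ j, A i j * x j)
    (π : Fin n → ℝ) (hπ : ∀ i, 1 - π i = b * (∑ j, A i j * x j) / x i) :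
    (∀ i, 0 < π i ∧ π i < 1) ∧
    ∀ p : Fin n → ℝ, (∀ i, 0 < p i) →
      (∀ i, p i / (∑ s, A s i * p s) = x i / (∑ j, A i j * x j)) →
      ∀ k, ∑ i, A k i * ((1 - π i) * x i * p i / (∑ s, A s i * p s)) =
        (1 - π k) * x k := by
  refine ⟨fun i => pos_and_lt_one hb (hx i) (hbmin i) (hπ i), fun p _ hratio k => ?_⟩
  have hdeflated : ∀ i, (1 - π i) * x i * p i / (∑ s, A s i * p s) = b * x i := fun i =>
    one_sub_mul_mul_div_eq (hx i).ne' (pos_of_lt_div hb (hx i) (hbmin i)).ne' (hπ i) (hratio i)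
  calc ∑ i, A k i * ((1 - π i) * x i * p i / (∑ s, A s i * p s))
      = b * ∑ i, A k i * x i := by
        simp only [hdeflated, Finset.mul_sum]
        exact Finset.sum_congr rfl fun i _ => mul_left_comm _ _ _
    _ = (1 - π k) * x k := (one_sub_mul_eq (hx k).ne' (hπ k)).symm

theorem stmt19 {n : ℕ} (A : Matrix (Fin n) (Fin n) ℝ)
    (hA : ∀ i j, 0 ≤ A i j) (hirr : MatIrreducible A) (hprod : Productive A)
    (x : Fin n → ℝ) (hx : ∀ i, 0 < x i)
    (hsurplus : ∀ i, 0 < x i - ∑ j, A i j * x j)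
    (b : ℝ) (hb : 0 < b) (hbmin : ∀ i, b < x i / ∑ j, A i j * x j)
    (π : Fin n → ℝ) (hπ : ∀ i, 1 - π i = b * (∑ j, A i j * x j) / x i) :
    (∀ i, 0 < π i ∧ π i < 1) ∧
    ∀ p : Fin n → ℝ, (∀ i, 0 < p i) →
      (∀ i, p i / (∑ s, A s i * p s) = x i / (∑ j, A i j * x j)) →
      ∀ k, ∑ i, A k i * ((1 - π i) * x i * p i / (∑ s, A s i * p s)) =
        (1 - π k) * x k :=
  stmt19_general A x hx b hb hbmin π hπ
end
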